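/- For any distinct integers a and b, the distance in the hexagonal grid between the horizontal lines L_a and L_b equals 2|a−b|−1. -/

import Mathlib

/-- The hexagonal grid in its brick wall representation: vertex set ℤ×ℤ,
with (x,y) adjacent to (x±1,y) always, and to (x,y+1) if x+y is even
(equivalently, to (x,y-1) if x+y is odd). -/
def hexGraph : SimpleGraph (ℤ × ℤ) where
  Adj u v := (u.2 = v.2 ∧ (u.1 = v.1 + 1 ∨ v.1 = u.1 + 1)) ∨
    (u.1 = v.1 ∧ ((v.2 = u.2 + 1 ∧ Even (u.1 + u.2)) ∨ (u.2 = v.2 + 1 ∧ Even (v.1 + v.2))))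
  symm := by
    constructor
    rintro u v (⟨h1, h2 | h2⟩ | ⟨h1, ⟨h2, h3⟩ | ⟨h2, h3⟩⟩)
    · exact Or.inl ⟨h1.symm, Or.inr h2⟩
    · exact Or.inl ⟨h1.symm, Or.inl h2⟩
    · exact Or.inr ⟨h1.symm, Or.inr ⟨h2, h3⟩⟩
    · exact Or.inr ⟨h1.symm, Or.inl ⟨h2, h3⟩⟩
  loopless := by constructor; rintro ⟨x, y⟩ (⟨_, h | h⟩ | ⟨_, ⟨h, _⟩ | ⟨h, _⟩⟩) <;> omega

/-- The graph distance from a vertex to the horizontal line L_k = {(x,k) : x ∈ ℤ}. -/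
noncomputable def hexLineDist (u : ℤ × ℤ) (k : ℤ) : ℕ :=
  sInf {n : ℕ | ∃ x : ℤ, hexGraph.dist u (x, k) = n}

/-!
The function `hexLevel (x, y) = 2y - ((x + y) mod 2)` changes by at most one along every edge,
so it is 1-Lipschitz for the graph distance. On `L_k` it takes only the values `2k` and `2k - 1`,
hence any two points of `L_a` and `L_b` are at distance at least `2|a - b| - 1`. Conversely,
starting at `(a, a)` the staircase up, right, up, right, …, up reaches `L_b` for `b > a` in
exactly `2(b - a) - 1` steps.
-/

namespace SimpleGraph

variable {V : Type*} {G : SimpleGraph V}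

theorem reachable_of_forall_reachable_add_one (f : ℤ → V)
    (h : ∀ n, G.Reachable (f n) (f (n + 1))) (m n : ℤ) : G.Reachable (f m) (f n) := by
  have := reflTransGen_of_succ (fun i j => G.Reachable (f i) (f j))
    (fun i _ => by simpa using h i) (fun i _ => by simpa using (h i).symm) (n := m) (m := n)
  induction this with
  | refl => rfl
  | tail _ hstep ih => exact ih.trans hstep

theorem Walk.abs_sub_le_length {f : V → ℤ} (hf : ∀ u v, G.Adj u v → |f u - f v| ≤ 1)
    {u v : V} (w : G.Walk u v) : |f u - f v| ≤ w.length := by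
  induction w with
  | nil => simp
  | @cons u v w hadj _ ih =>
    calc |f u - f w| ≤ |f u - f v| + |f v - f w| := abs_sub_le _ _ _
      _ ≤ 1 + _ := add_le_add (hf _ _ hadj) ih
      _ = _ := by simp [Walk.length_cons, add_comm]

theorem Reachable.abs_sub_le_dist {f : V → ℤ} (hf : ∀ u v, G.Adj u v → |f u - f v| ≤ 1)
    {u v : V} (huv : G.Reachable u v) : |f u - f v| ≤ G.dist u v := by
  obtain ⟨w, hw⟩ := huv.exists_walk_length_eq_dist
  exact hw ▸ w.abs_sub_le_length hf

end SimpleGraph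

open SimpleGraph

theorem hexGraph_adj_right (x y : ℤ) : hexGraph.Adj (x, y) (x + 1, y) :=
  Or.inl ⟨rfl, Or.inr rfl⟩

theorem hexGraph_adj_up {x y : ℤ} (h : Even (x + y)) : hexGraph.Adj (x, y) (x, y + 1) :=
  Or.inr ⟨rfl, Or.inl ⟨rfl, h⟩⟩

theorem hexGraph_reachable_up (x y : ℤ) : hexGraph.Reachable (x, y) (x, y + 1) := by
  rcases Int.even_or_odd (x + y) with h | h
  · exact (hexGraph_adj_up h).reachable
  · have hx1 : Even (x + 1 + y) := by rw [add_right_comm]; exact h.add_one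
    exact (hexGraph_adj_right x y).reachable.trans <|
      (hexGraph_adj_up hx1).reachable.trans (hexGraph_adj_right x (y + 1)).reachable.symm

theorem hexGraph_connected : hexGraph.Connected := by
  refine (connected_iff_exists_forall_reachable _).2 ⟨(0, 0), fun ⟨x, y⟩ => ?_⟩
  have horizontal : hexGraph.Reachable (0, 0) (x, 0) :=
    reachable_of_forall_reachable_add_one (·, 0) (fun n => (hexGraph_adj_right n 0).reachable) 0 x
  exact horizontal.trans <|
    reachable_of_forall_reachable_add_one (x, ·) (hexGraph_reachable_up x) 0 y

def hexLevel (p : ℤ × ℤ) : ℤ := 2 * p.2 - (p.1 + p.2) % 2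

theorem abs_hexLevel_sub_le_one {u v : ℤ × ℤ} (h : hexGraph.Adj u v) :
    |hexLevel u - hexLevel v| ≤ 1 := by
  obtain ⟨x, y⟩ := u
  obtain ⟨x', y'⟩ := v
  rw [abs_le, hexLevel, hexLevel]
  rcases h with ⟨h1, h2 | h2⟩ | ⟨h1, ⟨h2, h3⟩ | ⟨h2, h3⟩⟩ <;>
    simp only [Int.even_iff] at * <;> constructor <;> omega

theorem hexGraph_dist_ge (a b x y : ℤ) : 2 * |a - b| - 1 ≤ hexGraph.dist (x, a) (y, b) := by
  have hlevel := (hexGraph_connected.preconnected (x, a) (y, b)).abs_sub_le_dist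
    (fun _ _ => abs_hexLevel_sub_le_one)
  simp only [hexLevel] at hlevel
  rw [abs_le] at hlevel
  rcases abs_cases (a - b) with ⟨h, _⟩ | ⟨h, _⟩ <;> omega

theorem hexGraph_dist_staircase_le {x y : ℤ} (h : Even (x + y)) (n : ℕ) :
    hexGraph.dist (x, y) (x + n, y + n) ≤ 2 * n := by
  induction n with
  | zero => simp
  | succ n ih =>
    have hup : hexGraph.Adj (x + n, y + n) (x + n, y + n + 1) :=
      hexGraph_adj_up <| by
        rw [show x + n + (y + n) = x + y + 2 * n by ring]; exact h.add (even_two_mul _)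
    have hright := hexGraph_adj_right (x + n) (y + n + 1)
    calc hexGraph.dist (x, y) (x + (n + 1 : ℕ), y + (n + 1 : ℕ))
        = hexGraph.dist (x, y) (x + n + 1, y + n + 1) := by push_cast; simp only [add_assoc]
      _ ≤ hexGraph.dist (x, y) (x + n, y + n + 1) + 1 := by
        simpa [dist_eq_one_iff_adj.2 hright] using hright.reachable.dist_triangle_right (x, y)
      _ ≤ hexGraph.dist (x, y) (x + n, y + n) + 1 + 1 := by
        simpa [dist_eq_one_iff_adj.2 hup] using hup.reachable.dist_triangle_right (x, y)
      _ ≤ 2 * (n + 1) := by omega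

theorem hexGraph_exists_dist_le_of_lt {a b : ℤ} (hab : a < b) :
    ∃ x y : ℤ, hexGraph.dist (x, a) (y, b) ≤ 2 * (b - a) - 1 := by
  obtain ⟨n, hn⟩ : ∃ n : ℕ, b = a + n + 1 := ⟨(b - a - 1).toNat, by omega⟩
  have hup : hexGraph.Adj (a + n, a + n) (a + n, b) :=
    hn ▸ hexGraph_adj_up ⟨a + n, rfl⟩
  refine ⟨a, a + n, ?_⟩
  have hstairs := hexGraph_dist_staircase_le ⟨a, rfl⟩ n
  have htriangle := hup.reachable.dist_triangle_right (a, a)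
  rw [dist_eq_one_iff_adj.2 hup] at htriangle
  omega

theorem hexGraph_exists_dist_le {a b : ℤ} (hab : a ≠ b) :
    ∃ x y : ℤ, hexGraph.dist (x, a) (y, b) ≤ 2 * |a - b| - 1 := by
  rcases hab.lt_or_gt with h | h
  · rw [abs_sub_comm, abs_of_pos (sub_pos.2 h)]
    exact hexGraph_exists_dist_le_of_lt h
  · obtain ⟨x, y, hxy⟩ := hexGraph_exists_dist_le_of_lt h
    exact ⟨y, x, by rwa [dist_comm, abs_of_pos (sub_pos.2 h)]⟩

/-- the distance between the horizontal lines L_a and L_b, a ≠ b,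
is 2|a−b|−1. -/
theorem hex_line_line_dist (a b : ℤ) (hab : a ≠ b) :
    ((sInf {n : ℕ | ∃ x y : ℤ, hexGraph.dist (x, a) (y, b) = n} : ℕ) : ℤ)
      = 2 * |a - b| - 1 := by
  obtain ⟨x, y, hle⟩ := hexGraph_exists_dist_le hab
  set S := {n : ℕ | ∃ x y : ℤ, hexGraph.dist (x, a) (y, b) = n}
  have hxy : hexGraph.dist (x, a) (y, b) ∈ S := ⟨x, y, rfl⟩
  obtain ⟨x', y', hmin⟩ : sInf S ∈ S := Nat.sInf_mem ⟨_, hxy⟩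
  refine le_antisymm ?_ ?_
  · exact (Nat.cast_le.2 (Nat.sInf_le hxy)).trans hle
  · exact hmin ▸ hexGraph_dist_ge a b x' y'
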